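/- arXiv:2011.06702 — 3 statements merged into one kernel-verified Lean document; each statement's English description precedes it below -/
import Mathlib

section
/- Suppose a sequence θ_{k+1} = θ_k - η U_k in ℝ^d (with η > 0) satisfies, for all k < T, the regularity inequality ⟨θ_k - θ_T, U_k⟩ ≥ (η/2)‖U_k‖² + γ·(ℓ_k - ℓ*) where γ > 0 and ℓ_k ≥ ℓ* for all k. Then the average optimality gap satisfies (1/T)·∑_{k=0}^{T-1} (ℓ_k - ℓ*) ≤ ‖θ_0 - θ_T‖² / (2·η·γ·T). -/
open scoped RealInnerProductSpace BigOperators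

/-!
Along the iteration, `‖θ k - θ T‖²` decreases at step `k` by
`2η⟪θ k - θ T, U k⟫ - η²‖U k‖²`, which the regularity inequality bounds below by
`2ηγ (ℓ k - ℓ*)`. Summing over `k < T` telescopes to `2ηγ ∑ (ℓ k - ℓ*) ≤ ‖θ 0 - θ T‖²`.
-/

section

variable {E : Type*} [NormedAddCommGroup E] [InnerProductSpace ℝ E]

theorem norm_sub_smul_sq (x u : E) (η : ℝ) :
    ‖x - η • u‖ ^ 2 = ‖x‖ ^ 2 - 2 * η * ⟪x, u⟫ + η ^ 2 * ‖u‖ ^ 2 := by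
  rw [norm_sub_sq_real, real_inner_smul_right, norm_smul, Real.norm_eq_abs, mul_pow, sq_abs]
  ring

theorem two_mul_mul_le_norm_sq_sub_norm_sub_smul_sq {x u : E} {η g : ℝ} (hη : 0 ≤ η)
    (h : η / 2 * ‖u‖ ^ 2 + g ≤ ⟪x, u⟫) :
    2 * η * g ≤ ‖x‖ ^ 2 - ‖x - η • u‖ ^ 2 := by
  rw [norm_sub_smul_sq]
  nlinarith [mul_le_mul_of_nonneg_left h hη]

theorem two_mul_mul_sum_le_of_regular {θ U : ℕ → E} {g : ℕ → ℝ} {η : ℝ} (hη : 0 ≤ η)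
    (z : E) (T : ℕ) (hupd : ∀ k, θ (k + 1) = θ k - η • U k)
    (hreg : ∀ k < T, η / 2 * ‖U k‖ ^ 2 + g k ≤ ⟪θ k - z, U k⟫) :
    2 * η * ∑ k ∈ Finset.range T, g k ≤ ‖θ 0 - z‖ ^ 2 - ‖θ T - z‖ ^ 2 := by
  rw [← Finset.sum_range_sub' (fun k => ‖θ k - z‖ ^ 2), Finset.mul_sum]
  refine Finset.sum_le_sum fun k hk => ?_
  have hstep : θ (k + 1) - z = (θ k - z) - η • U k := by
    rw [hupd k, sub_right_comm]
  rw [hstep]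
  exact two_mul_mul_le_norm_sq_sub_norm_sub_smul_sq hη (hreg k (Finset.mem_range.mp hk))

end

theorem regularity_principle_convergence_general {d : ℕ} (T : ℕ)
    (η γ : ℝ) (hη : 0 < η) (hγ : 0 < γ)
    (θ U : ℕ → EuclideanSpace ℝ (Fin d)) (ℓ : ℕ → ℝ) (lstar : ℝ)
    (hupd : ∀ k, θ (k + 1) = θ k - η • U k)
    (hreg : ∀ k < T, ⟪θ k - θ T, U k⟫ ≥ (η / 2) * ‖U k‖ ^ 2 + γ * (ℓ k - lstar)) :
    (1 / (T : ℝ)) * ∑ k ∈ Finset.range T, (ℓ k - lstar) ≤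
      ‖θ 0 - θ T‖ ^ 2 / (2 * η * γ * T) := by
  have hsum := two_mul_mul_sum_le_of_regular hη.le (θ T) T hupd hreg
  rw [sub_self, norm_zero, zero_pow two_ne_zero, sub_zero, ← Finset.mul_sum, ← mul_assoc] at hsum
  have hηγ : 2 * η * γ ≠ 0 := by positivity
  calc (1 / (T : ℝ)) * ∑ k ∈ Finset.range T, (ℓ k - lstar)
      = (2 * η * γ * ∑ k ∈ Finset.range T, (ℓ k - lstar)) / (2 * η * γ * T) := by
        rw [mul_div_mul_left _ _ hηγ, one_div_mul_eq_div]
    _ ≤ ‖θ 0 - θ T‖ ^ 2 / (2 * η * γ * T) := by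
        gcongr

theorem regularity_principle_convergence {d : ℕ} (T : ℕ) (hT : 1 ≤ T)
    (η γ : ℝ) (hη : 0 < η) (hγ : 0 < γ)
    (θ U : ℕ → EuclideanSpace ℝ (Fin d)) (ℓ : ℕ → ℝ) (lstar : ℝ)
    (hupd : ∀ k, θ (k + 1) = θ k - η • U k)
    (hlb : ∀ k, lstar ≤ ℓ k)
    (hreg : ∀ k < T, ⟪θ k - θ T, U k⟫ ≥ (η / 2) * ‖U k‖ ^ 2 + γ * (ℓ k - lstar)) :
    (1 / (T : ℝ)) * ∑ k ∈ Finset.range T, (ℓ k - lstar) ≤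
      ‖θ 0 - θ T‖ ^ 2 / (2 * η * γ * T) :=
  regularity_principle_convergence_general T η γ hη hγ θ U ℓ lstar hupd hreg
end

section
/- Let f : ℝ^d → ℝ be convex and differentiable with a global minimizer θ*, and consider gradient descent θ_{k+1} = θ_k - η∇f(θ_k) with η > 0. If for all k < T we have ⟨θ_k - θ*, ∇f(θ_k)⟩ ≥ (η/2)‖∇f(θ_k)‖² + γ(f(θ_k) - f(θ*)) with γ > 0 (the regularity principle anchored at θ* instead of θ_T), then (1/T)∑_{k=0}^{T-1}(f(θ_k) - f(θ*)) ≤ ‖θ_0 - θ*‖²/(2ηγT). -/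
/-!
Each gradient step moves the iterate towards `θstar` by at least the current suboptimality:
expanding `‖θ (k+1) - θstar‖² = ‖θ k - θstar‖² - 2η⟪θ k - θstar, ∇f⟫ + η²‖∇f‖²` and inserting
the regularity inequality gives `2ηγ (f (θ k) - f θstar) ≤ ‖θ k - θstar‖² - ‖θ (k+1) - θstar‖²`.
Summing telescopes to `2ηγ ∑ (f (θ k) - f θstar) ≤ ‖θ 0 - θstar‖²`.
-/

open scoped RealInnerProductSpace BigOperators

section

variable {E : Type*} [NormedAddCommGroup E] [InnerProductSpace ℝ E]

theorem norm_sub_smul_sub_sq (x y g : E) (η : ℝ) :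
    ‖x - η • g - y‖ ^ 2 = ‖x - y‖ ^ 2 - 2 * η * ⟪x - y, g⟫ + η ^ 2 * ‖g‖ ^ 2 := by
  rw [sub_right_comm, norm_sub_sq_real, real_inner_smul_right, norm_smul, Real.norm_eq_abs,
    mul_pow, sq_abs]
  ring

theorem norm_sub_smul_sub_sq_le_of_inner_ge {x y g : E} {η γ e : ℝ} (hη : 0 ≤ η)
    (hreg : ⟪x - y, g⟫ ≥ (η / 2) * ‖g‖ ^ 2 + γ * e) :
    ‖x - η • g - y‖ ^ 2 ≤ ‖x - y‖ ^ 2 - 2 * η * γ * e := by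
  rw [norm_sub_smul_sub_sq]
  nlinarith [mul_le_mul_of_nonneg_left hreg hη]

end

theorem Finset.sum_range_le_of_le_sub_succ {e a : ℕ → ℝ} {T : ℕ}
    (h : ∀ k < T, e k ≤ a k - a (k + 1)) (haT : 0 ≤ a T) :
    ∑ k ∈ Finset.range T, e k ≤ a 0 :=
  calc ∑ k ∈ Finset.range T, e k
      ≤ ∑ k ∈ Finset.range T, (a k - a (k + 1)) :=
        Finset.sum_le_sum fun k hk => h k (Finset.mem_range.mp hk)
    _ = a 0 - a T := Finset.sum_range_sub' a T
    _ ≤ a 0 := sub_le_self _ haT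

theorem regularity_gradient_descent_general {d : ℕ} (T : ℕ)
    (η γ : ℝ) (hη : 0 < η) (hγ : 0 < γ)
    (f : EuclideanSpace ℝ (Fin d) → ℝ)
    (θstar : EuclideanSpace ℝ (Fin d))
    (θ : ℕ → EuclideanSpace ℝ (Fin d))
    (hupd : ∀ k, θ (k + 1) = θ k - η • gradient f (θ k))
    (hreg : ∀ k < T, ⟪θ k - θstar, gradient f (θ k)⟫ ≥
        (η / 2) * ‖gradient f (θ k)‖ ^ 2 + γ * (f (θ k) - f θstar)) :
    (1 / (T : ℝ)) * ∑ k ∈ Finset.range T, (f (θ k) - f θstar) ≤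
      ‖θ 0 - θstar‖ ^ 2 / (2 * η * γ * T) := by
  have hc : 0 < 2 * η * γ := by positivity
  have hdescent : ∀ k < T, 2 * η * γ * (f (θ k) - f θstar) ≤
      ‖θ k - θstar‖ ^ 2 - ‖θ (k + 1) - θstar‖ ^ 2 := fun k hk => by
    have := norm_sub_smul_sub_sq_le_of_inner_ge hη.le (hreg k hk)
    rw [hupd k]
    linarith
  have hsum : 2 * η * γ * ∑ k ∈ Finset.range T, (f (θ k) - f θstar) ≤ ‖θ 0 - θstar‖ ^ 2 := by
    rw [Finset.mul_sum]
    exact Finset.sum_range_le_of_le_sub_succ hdescent (sq_nonneg _)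
  rw [one_div_mul_eq_div, ← div_div]
  exact div_le_div_of_nonneg_right ((le_div_iff₀' hc).mpr hsum) T.cast_nonneg

theorem regularity_gradient_descent {d : ℕ} (T : ℕ) (hT : 1 ≤ T)
    (η γ : ℝ) (hη : 0 < η) (hγ : 0 < γ)
    (f : EuclideanSpace ℝ (Fin d) → ℝ) (hconv : ConvexOn ℝ Set.univ f)
    (hdiff : Differentiable ℝ f)
    (θstar : EuclideanSpace ℝ (Fin d)) (hmin : ∀ θ', f θstar ≤ f θ')
    (θ : ℕ → EuclideanSpace ℝ (Fin d))
    (hupd : ∀ k, θ (k + 1) = θ k - η • gradient f (θ k))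
    (hreg : ∀ k < T, ⟪θ k - θstar, gradient f (θ k)⟫ ≥
        (η / 2) * ‖gradient f (θ k)‖ ^ 2 + γ * (f (θ k) - f θstar)) :
    (1 / (T : ℝ)) * ∑ k ∈ Finset.range T, (f (θ k) - f θstar) ≤
      ‖θ 0 - θstar‖ ^ 2 / (2 * η * γ * T) :=
  regularity_gradient_descent_general T η γ hη hγ f θstar θ hupd hreg
end

section
/- Suppose θ_{k+1} = θ_k - η U_k with η > 0 satisfies, for all k < T, the regularity principle ⟨θ_k - θ_T, U_k⟩ ≥ (η/2)‖U_k‖² + γ (ℓ_k(θ_k) - m_k), where γ > 0, ℓ_k : ℝ^d → ℝ, and m_k = inf_θ ℓ_k(θ). Suppose further that indices k are partitioned into B epochs of size n (T = nB) such that ∑ over each epoch of m_k equals n·F* where F* = inf_θ (1/n)∑_i ℓ^{(i)}(θ) for the underlying sample losses ℓ^{(i)} (over-parameterization). Then (1/T)∑_{k=0}^{T-1} ℓ_k(θ_k) - F* ≤ ‖θ_0 - θ_T‖²/(2ηγT). -/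
/-!
The squared distance to the final iterate `θ_T` is a Lyapunov function: expanding
`‖θ_{k+1} - θ_T‖² = ‖θ_k - θ_T‖² - 2η⟪θ_k - θ_T, U_k⟫ + η²‖U_k‖²` and inserting the regularity
principle shows that each step decreases it by at least `2ηγ (ℓ_k(θ_k) - m_k)`. Telescoping over
the `T` steps bounds the summed suboptimality gaps by `‖θ_0 - θ_T‖²`, and over-parameterization
turns the summed infima `∑ m_k` into `T · F*`, one epoch at a time.
-/

open scoped RealInnerProductSpace BigOperators

open Finset

section

variable {E : Type*} [NormedAddCommGroup E] [InnerProductSpace ℝ E]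

lemma two_mul_mul_le_norm_sub_sq_sub_norm_sub_sq {x θ u : E} {η γ gap : ℝ} (hη : 0 ≤ η)
    (hreg : (η / 2) * ‖u‖ ^ 2 + γ * gap ≤ ⟪θ - x, u⟫) :
    2 * η * γ * gap ≤ ‖θ - x‖ ^ 2 - ‖θ - η • u - x‖ ^ 2 := by
  have hexpand : ‖θ - η • u - x‖ ^ 2 = ‖θ - x‖ ^ 2 - 2 * (η * ⟪θ - x, u⟫) + η ^ 2 * ‖u‖ ^ 2 := by
    rw [sub_right_comm, norm_sub_sq_real, real_inner_smul_right, norm_smul, mul_pow,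
      Real.norm_eq_abs, sq_abs]
  nlinarith [mul_le_mul_of_nonneg_left hreg hη]

lemma sum_range_le_sub_of_le_sub_succ {f g : ℕ → ℝ} {T : ℕ}
    (h : ∀ k < T, f k ≤ g k - g (k + 1)) :
    ∑ k ∈ range T, f k ≤ g 0 - g T := by
  rw [← sum_range_sub' g T]
  exact sum_le_sum fun k hk => h k (mem_range.mp hk)

lemma sum_gap_le_of_regularity {θ U : ℕ → E} {ℓ : ℕ → E → ℝ} {m : ℕ → ℝ} {η γ : ℝ} {T : ℕ}
    (x : E) (hη : 0 ≤ η) (hupd : ∀ k, θ (k + 1) = θ k - η • U k)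
    (hreg : ∀ k < T, (η / 2) * ‖U k‖ ^ 2 + γ * (ℓ k (θ k) - m k) ≤ ⟪θ k - x, U k⟫) :
    2 * η * γ * ∑ k ∈ range T, (ℓ k (θ k) - m k) ≤ ‖θ 0 - x‖ ^ 2 - ‖θ T - x‖ ^ 2 := by
  rw [mul_sum]
  refine sum_range_le_sub_of_le_sub_succ (g := fun k => ‖θ k - x‖ ^ 2) fun k hk => ?_
  rw [hupd k]
  exact two_mul_mul_le_norm_sub_sq_sub_norm_sub_sq hη (hreg k hk)

end

lemma sum_range_mul_eq_of_sum_Ico_eq {M : Type*} [AddCommMonoid M] {f : ℕ → M} {n B : ℕ} {c : M}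
    (h : ∀ b < B, ∑ k ∈ Ico (n * b) (n * (b + 1)), f k = c) :
    ∑ k ∈ range (n * B), f k = B • c := by
  induction B with
  | zero => simp
  | succ B ih =>
    rw [← sum_range_add_sum_Ico f (Nat.mul_le_mul_left n B.le_succ),
      ih fun b hb => h b (hb.trans B.lt_succ_self), h B B.lt_succ_self, succ_nsmul]

theorem regularity_principle_convergence_full_general {d n B : ℕ} (hn : 1 ≤ n) (hB : 1 ≤ B)
    (T : ℕ) (hT : T = n * B) (η γ : ℝ) (hη : 0 < η) (hγ : 0 < γ)
    (θ U : ℕ → EuclideanSpace ℝ (Fin d))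
    (ℓ : ℕ → EuclideanSpace ℝ (Fin d) → ℝ) (m : ℕ → ℝ)
    (Fstar : ℝ)
    (hupd : ∀ k, θ (k + 1) = θ k - η • U k)
    (hepoch : ∀ b < B, ∑ k ∈ Finset.Ico (n * b) (n * (b + 1)), m k = (n : ℝ) * Fstar)
    (hreg : ∀ k < T, ⟪θ k - θ T, U k⟫ ≥
        (η / 2) * ‖U k‖ ^ 2 + γ * (ℓ k (θ k) - m k)) :
    (1 / (T : ℝ)) * ∑ k ∈ Finset.range T, ℓ k (θ k) - Fstar ≤
      ‖θ 0 - θ T‖ ^ 2 / (2 * η * γ * T) := by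
  have hTpos : (0 : ℝ) < T := by
    rw [hT]
    exact_mod_cast Nat.mul_pos hn hB
  have hdescent := sum_gap_le_of_regularity (θ T) hη.le hupd hreg
  have hinf : ∑ k ∈ range T, m k = T * Fstar := by
    rw [hT, sum_range_mul_eq_of_sum_Ico_eq hepoch, nsmul_eq_mul]
    push_cast
    ring
  rw [sum_sub_distrib, hinf, sub_self, norm_zero, zero_pow two_ne_zero, sub_zero] at hdescent
  rw [le_div_iff₀ (by positivity)]
  calc (1 / (T : ℝ) * ∑ k ∈ range T, ℓ k (θ k) - Fstar) * (2 * η * γ * T)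
      = 2 * η * γ * (∑ k ∈ range T, ℓ k (θ k) - T * Fstar) := by field_simp
    _ ≤ ‖θ 0 - θ T‖ ^ 2 := hdescent

theorem regularity_principle_convergence_full {d n B : ℕ} (hn : 1 ≤ n) (hB : 1 ≤ B)
    (T : ℕ) (hT : T = n * B) (η γ : ℝ) (hη : 0 < η) (hγ : 0 < γ)
    (θ U : ℕ → EuclideanSpace ℝ (Fin d))
    (ℓ : ℕ → EuclideanSpace ℝ (Fin d) → ℝ) (m : ℕ → ℝ)
    (ℓsample : Fin n → EuclideanSpace ℝ (Fin d) → ℝ) (Fstar : ℝ)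
    (hm : ∀ k, m k = ⨅ θ', ℓ k θ')
    (hF : Fstar = ⨅ θ', (1 / (n : ℝ)) * ∑ i, ℓsample i θ')
    (hupd : ∀ k, θ (k + 1) = θ k - η • U k)
    (hepoch : ∀ b < B, ∑ k ∈ Finset.Ico (n * b) (n * (b + 1)), m k = (n : ℝ) * Fstar)
    (hreg : ∀ k < T, ⟪θ k - θ T, U k⟫ ≥
        (η / 2) * ‖U k‖ ^ 2 + γ * (ℓ k (θ k) - m k)) :
    (1 / (T : ℝ)) * ∑ k ∈ Finset.range T, ℓ k (θ k) - Fstar ≤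
      ‖θ 0 - θ T‖ ^ 2 / (2 * η * γ * T) :=
  regularity_principle_convergence_full_general hn hB T hT η γ hη hγ θ U ℓ m Fstar hupd hepoch hreg
end
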